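/- Let D be a generating class on binary variables (all I_δ = 2) and let b satisfy deg b = 2, F_b ≠ ∅ and Δ̄_b ≠ ∅, with connected components Γ_1,…,Γ_c of G(Δ̄_b). Let G_b be the group of transformations of tables generated by, for each l = 2,…,c, the map that simultaneously swaps the levels 0 and 1 of every variable in Γ_l. Then G_b maps F_b to itself and acts transitively on F_b; that is, for any n, n′ ∈ F_b there exists g ∈ G_b with n′ = g(n). -/

import Mathlib

open Finset

variable {m : ℕ}

/-- The set of cells of an `m`-way contingency table with `I δ` levels for variable `δ`. -/
abbrev Cell (I : Fin m → ℕ) := ∀ δ : Fin m, Fin (I δ)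

/-- Marginal cells for a subset `D` of the variables. -/
abbrev PCell (I : Fin m → ℕ) (D : Finset (Fin m)) := ∀ δ : {x // x ∈ D}, Fin (I δ.1)

/-- Restriction of a cell to the variables in `D`. -/
def restrictC (I : Fin m → ℕ) (D : Finset (Fin m)) (i : Cell I) : PCell I D :=
  fun δ => i δ.1

/-- The `D`-marginal of a contingency table `n`. -/
def margin (I : Fin m → ℕ) (n : Cell I → ℕ) (D : Finset (Fin m)) (f : PCell I D) : ℕ :=
  ∑ i : Cell I, if restrictC I D i = f then n i else 0

/-- The fiber of `b = A n₀`, i.e. all tables sharing all `D`-marginals, `D ∈ 𝒟`, with `n₀`. -/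
def fiber (I : Fin m → ℕ) (𝒟 : Finset (Finset (Fin m))) (n₀ : Cell I → ℕ) :
    Set (Cell I → ℕ) :=
  {n | ∀ D ∈ 𝒟, ∀ f : PCell I D, margin I n D f = margin I n₀ D f}

/-- Sample size (total frequency) of a table. -/
def total (I : Fin m → ℕ) (n : Cell I → ℕ) : ℕ := ∑ i : Cell I, n i

/-- The one-dimensional marginal of `n` for variable `δ` at level `v`. -/
def margin1 (I : Fin m → ℕ) (n : Cell I → ℕ) (δ : Fin m) (v : Fin (I δ)) : ℕ :=
  ∑ i : Cell I, if i δ = v then n i else 0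

/-- For a degree two fiber represented by `n₀`, variable `δ` is degenerate if a single
level has one-dimensional marginal `2`. -/
def Degenerate (I : Fin m → ℕ) (n₀ : Cell I → ℕ) (δ : Fin m) : Prop :=
  ∃ v : Fin (I δ), margin1 I n₀ δ v = 2

/-- Variable `δ` is non-degenerate if two distinct levels each have one-dimensional
marginal `1`. -/
def Nondegenerate (I : Fin m → ℕ) (n₀ : Cell I → ℕ) (δ : Fin m) : Prop :=
  ∃ v w : Fin (I δ), v ≠ w ∧ margin1 I n₀ δ v = 1 ∧ margin1 I n₀ δ w = 1

/-- The independence graph of a generating class `𝒟`: an edge between two distinct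
variables iff some `D ∈ 𝒟` contains both. -/
def indepGraph (𝒟 : Finset (Finset (Fin m))) : SimpleGraph (Fin m) :=
  SimpleGraph.fromRel (fun a b => ∃ D ∈ 𝒟, a ∈ D ∧ b ∈ D)

/-- The set of non-degenerate variables `Δ̄_b`. -/
def ndSet (I : Fin m → ℕ) (n₀ : Cell I → ℕ) : Set (Fin m) :=
  {δ | Nondegenerate I n₀ δ}

/-- `Γ` enumerates the connected components `Γ_1, …, Γ_{d+1}` of the induced subgraph
`G(Δ̄_b)` of the independence graph on the non-degenerate variables. -/
def IsComponents (I : Fin m → ℕ) (𝒟 : Finset (Finset (Fin m))) (n₀ : Cell I → ℕ)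
    (d : ℕ) (Γ : Fin (d + 1) → Set (Fin m)) : Prop :=
  (∀ k, (Γ k).Nonempty) ∧
  (⋃ k, Γ k) = ndSet I n₀ ∧
  (∀ k l, k ≠ l → Disjoint (Γ k) (Γ l)) ∧
  ∀ (k : Fin (d + 1)) (a b : ndSet I n₀), a.1 ∈ Γ k →
    (((indepGraph 𝒟).induce (ndSet I n₀)).Reachable a b ↔ b.1 ∈ Γ k)

open scoped Classical in
/-- The cell obtained by swapping, in each variable `δ ∈ S`, the levels
`lev0 δ` and `lev1 δ`. -/
noncomputable def swapCells (I : Fin m → ℕ) (S : Set (Fin m))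
    (lev0 lev1 : ∀ δ : Fin m, Fin (I δ)) (i : Cell I) : Cell I :=
  fun δ => if δ ∈ S then Equiv.swap (lev0 δ) (lev1 δ) (i δ) else i δ

/-- The induced level-swapping map on tables. -/
noncomputable def actSwap (I : Fin m → ℕ) (S : Set (Fin m))
    (lev0 lev1 : ∀ δ : Fin m, Fin (I δ)) (n : Cell I → ℕ) : Cell I → ℕ :=
  fun i => n (swapCells I S lev0 lev1 i)

/-- The union of the components `Γ_l`, `l = 2, …, c`, selected by the coordinates of the
`GF(2)`-vector `v` that are equal to `1`. -/
def gSet {m : ℕ} (d : ℕ) (Γ : Fin (d + 1) → Set (Fin m)) (v : Fin d → ZMod 2) :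
    Set (Fin m) :=
  ⋃ l : Fin d, if v l = 1 then Γ l.succ else ∅

/-- The composition of the level-swapping generators `σ_l`, `l ∈ L`, of the group `G_b`
for binary variables: `σ_l` simultaneously swaps the levels `0` and `1` of every
variable in the component `Γ_l`. -/
noncomputable def GbApply {m : ℕ} (d : ℕ) (Γ : Fin (d + 1) → Set (Fin m))
    (L : List (Fin (d + 1))) :
    (Cell (fun _ : Fin m => 2) → ℕ) → (Cell (fun _ : Fin m => 2) → ℕ) :=
  L.foldr
    (fun l f =>
      actSwap (fun _ : Fin m => 2) (Γ l) (fun _ => (0 : Fin 2)) (fun _ => (1 : Fin 2)) ∘ f)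
    id

/-! Since the sample size is two, every table of the fiber is a pair table `{u, v}` of cells,
and `{u, v}` lies in the fiber of `{x, y}` iff the two pairs agree, as unordered pairs, on
every `D ∈ 𝒟`; the non-degenerate variables are those where `x` and `y` differ. A set `D ∈ 𝒟`
that meets a component `Γ k` has all its non-degenerate variables in `Γ k`, where flipping
the levels exchanges `x` and `y`, so each flip preserves the marginals of `{x, y}`, hence the
fiber. Conversely, for `{u, v}` in the fiber the sets where `u`, respectively `v`, differs
from `x` are unions of components partitioning `Δ̄_b`; one of them avoids `Γ 0`, and flipping
it carries `{x, y}` to `{u, v}`. -/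

section PairTable

variable {α β : Type*} [DecidableEq α] [DecidableEq β]

def pairTable (x y : α) : α → ℕ := fun i => (if i = x then 1 else 0) + (if i = y then 1 else 0)

lemma pairTable_comm (x y : α) : pairTable x y = pairTable y x :=
  funext fun _ => add_comm _ _

lemma pairTable_eq_count (x y : α) : pairTable x y = fun i => Multiset.count i {x, y} := by
  funext i
  simp [pairTable, Multiset.count_cons, Multiset.count_singleton, add_comm]

lemma pairTable_eq_pairTable_iff {a b c d : α} :
    pairTable a b = pairTable c d ↔ s(a, b) = s(c, d) := by
  simp only [pairTable_eq_count, funext_iff, ← Multiset.ext, Multiset.insert_eq_cons,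
    Multiset.cons_eq_cons, Multiset.singleton_inj, Multiset.singleton_eq_cons_iff, Sym2.eq_iff]
  grind

lemma sum_ite_pairTable [Fintype α] (g : α → β) (x y : α) (b : β) :
    ∑ i, (if g i = b then pairTable x y i else 0) = pairTable (g x) (g y) b := by
  rw [← Finset.sum_filter]
  simp only [pairTable, Finset.sum_add_distrib, Finset.sum_ite_eq', Finset.mem_filter,
    Finset.mem_univ, true_and]
  simp only [eq_comm]

lemma exists_pairTable_of_sum_eq_two [Fintype α] {n : α → ℕ} (h : ∑ i, n i = 2) :
    ∃ x y, n = pairTable x y := by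
  set f := Finsupp.equivFunOnFinite.symm n
  have hcard : Multiset.card f.toMultiset = 2 := by
    rw [Finsupp.card_toMultiset, Finsupp.sum_fintype _ _ (fun _ => rfl)]
    exact h
  obtain ⟨x, y, hxy⟩ := Multiset.card_eq_two.mp hcard
  refine ⟨x, y, funext fun i => ?_⟩
  rw [pairTable_eq_count, ← hxy]
  exact (f.count_toMultiset i).symm

end PairTable

section Marginals

variable {I : Fin m → ℕ} {𝒟 : Finset (Finset (Fin m))}

lemma restrictC_eq_restrictC_iff {D : Finset (Fin m)} {a b : Cell I} :
    restrictC I D a = restrictC I D b ↔ ∀ δ ∈ D, a δ = b δ :=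
  ⟨fun h δ hδ => congrFun h ⟨δ, hδ⟩, fun h => funext fun δ => h δ.1 δ.2⟩

lemma margin_pairTable (x y : Cell I) (D : Finset (Fin m)) :
    margin I (pairTable x y) D = pairTable (restrictC I D x) (restrictC I D y) :=
  funext fun _ => sum_ite_pairTable _ _ _ _

lemma margin1_pairTable (x y : Cell I) (δ : Fin m) :
    margin1 I (pairTable x y) δ = pairTable (x δ) (y δ) :=
  funext fun _ => sum_ite_pairTable _ _ _ _

lemma pairTable_mem_fiber_iff {u v x y : Cell I} :
    pairTable u v ∈ fiber I 𝒟 (pairTable x y) ↔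
      ∀ D ∈ 𝒟, s(restrictC I D u, restrictC I D v) = s(restrictC I D x, restrictC I D y) := by
  refine forall₂_congr fun D _ => ?_
  rw [← funext_iff, margin_pairTable, margin_pairTable, pairTable_eq_pairTable_iff]

lemma nondegenerate_pairTable_iff {x y : Cell I} {δ : Fin m} :
    Nondegenerate I (pairTable x y) δ ↔ x δ ≠ y δ := by
  simp only [Nondegenerate, margin1_pairTable]
  refine ⟨fun ⟨v, w, hvw, hv, hw⟩ hxy => ?_, fun h => ⟨x δ, y δ, h, ?_, ?_⟩⟩
  · simp only [pairTable, hxy] at hv hw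
    split_ifs at hv hw <;> simp_all
  · simpa [pairTable] using h
  · simpa [pairTable] using h.symm

lemma ndSet_pairTable (x y : Cell I) : ndSet I (pairTable x y) = {δ | x δ ≠ y δ} :=
  Set.ext fun _ => nondegenerate_pairTable_iff

lemma sym2_apply_eq_of_pairTable_mem_fiber (hcov : ∀ δ : Fin m, ∃ D ∈ 𝒟, δ ∈ D)
    {u v x y : Cell I} (hf : pairTable u v ∈ fiber I 𝒟 (pairTable x y)) (δ : Fin m) :
    s(u δ, v δ) = s(x δ, y δ) := by
  obtain ⟨D, hD, hδ⟩ := hcov δ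
  simpa [restrictC] using
    congrArg (Sym2.map fun f => f ⟨δ, hδ⟩) (pairTable_mem_fiber_iff.mp hf D hD)

end Marginals

section Flip

abbrev BinCell (m : ℕ) := Cell (fun _ : Fin m => 2)

noncomputable def flipCell (S : Set (Fin m)) : BinCell m → BinCell m :=
  swapCells (fun _ => 2) S (fun _ => 0) (fun _ => 1)

noncomputable def flipTable (S : Set (Fin m)) : (BinCell m → ℕ) → BinCell m → ℕ :=
  actSwap (fun _ => 2) S (fun _ => 0) (fun _ => 1)

lemma swap_zero_one_eq_iff {a b : Fin 2} : Equiv.swap 0 1 a = b ↔ a ≠ b := by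
  revert a b
  decide

open scoped Classical in
lemma flipCell_apply (S : Set (Fin m)) (i : BinCell m) (δ : Fin m) :
    flipCell S i δ = if δ ∈ S then Equiv.swap 0 1 (i δ) else i δ :=
  rfl

lemma flipTable_apply (S : Set (Fin m)) (n : BinCell m → ℕ) (i : BinCell m) :
    flipTable S n i = n (flipCell S i) :=
  rfl

lemma flipCell_involutive (S : Set (Fin m)) : Function.Involutive (flipCell S) := by
  intro i
  funext δ
  by_cases h : δ ∈ S <;> simp [flipCell_apply, h]

lemma flipTable_involutive (S : Set (Fin m)) : Function.Involutive (flipTable S) := by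
  intro n
  funext i
  simp only [flipTable_apply, flipCell_involutive S i]

lemma flipTable_empty : flipTable (∅ : Set (Fin m)) = id := by
  funext n i
  show n (flipCell ∅ i) = n i
  congr 1
  funext δ
  simp [flipCell_apply]

lemma flipCell_flipCell_of_disjoint {S T : Set (Fin m)} (h : Disjoint S T) (i : BinCell m) :
    flipCell S (flipCell T i) = flipCell (S ∪ T) i := by
  funext δ
  by_cases hS : δ ∈ S
  · simp [flipCell_apply, hS, Set.disjoint_left.mp h hS]
  · by_cases hT : δ ∈ T <;> simp [flipCell_apply, hS, hT]

lemma flipTable_flipTable_of_disjoint {S T : Set (Fin m)} (h : Disjoint S T)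
    (n : BinCell m → ℕ) : flipTable S (flipTable T n) = flipTable (S ∪ T) n := by
  funext i
  rw [flipTable_apply, flipTable_apply, flipCell_flipCell_of_disjoint h.symm, Set.union_comm,
    flipTable_apply]

lemma flipCell_setOf_ne (x w : BinCell m) : flipCell {δ | w δ ≠ x δ} x = w := by
  funext δ
  rw [flipCell_apply]
  split_ifs with h
  · exact swap_zero_one_eq_iff.mpr (Ne.symm h)
  · exact not_not.mp h |>.symm

lemma flipCell_setOf_ne_eq_of_sym2_eq {u v x y : BinCell m}
    (h : ∀ δ, s(u δ, v δ) = s(x δ, y δ)) : flipCell {δ | u δ ≠ x δ} y = v := by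
  funext δ
  rw [flipCell_apply]
  rcases Sym2.eq_iff.mp (h δ) with ⟨hu, hv⟩ | ⟨hu, hv⟩
  · simp [hu, hv]
  · split_ifs with hux
    · exact swap_zero_one_eq_iff.mpr (by rw [hv, ← hu]; exact hux)
    · rw [hv, ← hu, not_not.mp hux]

lemma flipTable_pairTable (S : Set (Fin m)) (x y : BinCell m) :
    flipTable S (pairTable x y) = pairTable (flipCell S x) (flipCell S y) := by
  funext i
  simp only [flipTable_apply, pairTable, (flipCell_involutive S).eq_iff]

lemma restrictC_flipCell_of_forall_notMem {D : Finset (Fin m)} {S : Set (Fin m)}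
    (h : ∀ δ ∈ D, δ ∉ S) (a : BinCell m) :
    restrictC _ D (flipCell S a) = restrictC _ D a :=
  restrictC_eq_restrictC_iff.mpr fun δ hδ => by simp [flipCell_apply, h δ hδ]

lemma restrictC_flipCell_eq_of_forall_mem_iff {D : Finset (Fin m)} {S : Set (Fin m)}
    {x y : BinCell m} (h : ∀ δ ∈ D, δ ∈ S ↔ x δ ≠ y δ) :
    restrictC _ D (flipCell S x) = restrictC _ D y := by
  refine restrictC_eq_restrictC_iff.mpr fun δ hδ => ?_
  rw [flipCell_apply]
  split_ifs with hS
  · exact swap_zero_one_eq_iff.mpr ((h δ hδ).mp hS)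
  · exact not_not.mp (mt (h δ hδ).mpr hS)

lemma restrictC_flipCell_congr {D : Finset (Fin m)} (S : Set (Fin m)) {a b : BinCell m}
    (h : restrictC _ D a = restrictC _ D b) :
    restrictC _ D (flipCell S a) = restrictC _ D (flipCell S b) :=
  restrictC_eq_restrictC_iff.mpr fun δ hδ => by
    simp [flipCell_apply, restrictC_eq_restrictC_iff.mp h δ hδ]

lemma GbApply_cons (d : ℕ) (Γ : Fin (d + 1) → Set (Fin m)) (l : Fin (d + 1))
    (L : List (Fin (d + 1))) : GbApply d Γ (l :: L) = flipTable (Γ l) ∘ GbApply d Γ L :=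
  rfl

lemma GbApply_append (d : ℕ) (Γ : Fin (d + 1) → Set (Fin m)) (L L' : List (Fin (d + 1))) :
    GbApply d Γ (L ++ L') = GbApply d Γ L ∘ GbApply d Γ L' := by
  induction L with
  | nil => rfl
  | cons l L ih => rw [List.cons_append, GbApply_cons, GbApply_cons, ih, Function.comp_assoc]

lemma GbApply_eq_flipTable_iUnion {d : ℕ} {Γ : Fin (d + 1) → Set (Fin m)}
    (hdisj : ∀ k l, k ≠ l → Disjoint (Γ k) (Γ l)) {L : List (Fin (d + 1))} (hL : L.Nodup) :
    GbApply d Γ L = flipTable (⋃ l ∈ L, Γ l) := by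
  induction L with
  | nil => simp [GbApply, flipTable_empty]
  | cons l L ih =>
    obtain ⟨hl, hL⟩ := List.nodup_cons.mp hL
    have hdisjL : Disjoint (Γ l) (⋃ l' ∈ L, Γ l') :=
      Set.disjoint_iUnion₂_right.mpr fun l' hl' => hdisj l l' (ne_of_mem_of_not_mem hl' hl).symm
    funext n
    rw [GbApply_cons, ih hL, Function.comp_apply, flipTable_flipTable_of_disjoint hdisjL]
    congr 1
    ext δ
    simp

lemma GbApply_toList {d : ℕ} {Γ : Fin (d + 1) → Set (Fin m)}
    (hdisj : ∀ k l, k ≠ l → Disjoint (Γ k) (Γ l)) (K : Finset (Fin (d + 1))) :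
    GbApply d Γ K.toList = flipTable (⋃ k ∈ K, Γ k) := by
  simp only [GbApply_eq_flipTable_iUnion hdisj K.nodup_toList, Finset.mem_toList]

end Flip

section Components

variable {I : Fin m → ℕ} {𝒟 : Finset (Finset (Fin m))} {n₀ : Cell I → ℕ}
  {d : ℕ} {Γ : Fin (d + 1) → Set (Fin m)} {N T : Set (Fin m)}

lemma indepGraph_adj_iff {a b : Fin m} :
    (indepGraph 𝒟).Adj a b ↔ a ≠ b ∧ ∃ D ∈ 𝒟, a ∈ D ∧ b ∈ D := by
  simp [indepGraph, and_comm]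

lemma mem_of_reachable_induce_indepGraph
    (hT : ∀ D ∈ 𝒟, ∀ a ∈ D, ∀ b ∈ D, b ∈ N → a ∈ T → b ∈ T) {a b : N}
    (hab : ((indepGraph 𝒟).induce N).Reachable a b) (ha : a.1 ∈ T) : b.1 ∈ T := by
  obtain ⟨w⟩ := hab
  induction w with
  | nil => exact ha
  | cons hadj _ ih =>
    obtain ⟨-, D, hD, h₁, h₂⟩ := indepGraph_adj_iff.mp (SimpleGraph.induce_adj.mp hadj)
    exact ih (hT D hD _ h₁ _ h₂ (Subtype.prop _) ha)

namespace IsComponents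

lemma subset_ndSet (hc : IsComponents I 𝒟 n₀ d Γ) (k : Fin (d + 1)) : Γ k ⊆ ndSet I n₀ :=
  hc.2.1 ▸ Set.subset_iUnion Γ k

lemma mem_of_mem_of_mem_ndSet (hc : IsComponents I 𝒟 n₀ d Γ) {D : Finset (Fin m)} (hD : D ∈ 𝒟)
    {a b : Fin m} {k : Fin (d + 1)} (ha : a ∈ D) (hak : a ∈ Γ k) (hb : b ∈ D)
    (hbN : b ∈ ndSet I n₀) : b ∈ Γ k := by
  obtain rfl | hab := eq_or_ne a b
  · exact hak
  have hadj : ((indepGraph 𝒟).induce (ndSet I n₀)).Adj ⟨a, hc.subset_ndSet k hak⟩ ⟨b, hbN⟩ :=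
    SimpleGraph.induce_adj.mpr (indepGraph_adj_iff.mpr ⟨hab, D, hD, ha, hb⟩)
  exact (hc.2.2.2 k _ _ hak).mp hadj.reachable

open scoped Classical in
lemma eq_iUnion_of_closed (hc : IsComponents I 𝒟 n₀ d Γ) (hTN : T ⊆ ndSet I n₀)
    (hT : ∀ D ∈ 𝒟, ∀ a ∈ D, ∀ b ∈ D, b ∈ ndSet I n₀ → a ∈ T → b ∈ T) :
    T = ⋃ k ∈ Finset.univ.filter (fun k => Γ k ⊆ T), Γ k := by
  refine Set.Subset.antisymm (fun δ hδ => ?_)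
    (Set.iUnion₂_subset fun k hk => (Finset.mem_filter.mp hk).2)
  have hδN := hTN hδ
  obtain ⟨k, hk⟩ := Set.mem_iUnion.mp (hc.2.1.symm ▸ hδN : δ ∈ ⋃ k, Γ k)
  refine Set.mem_iUnion₂.mpr ⟨k, Finset.mem_filter.mpr ⟨Finset.mem_univ k, fun δ' hδ' => ?_⟩, hk⟩
  exact mem_of_reachable_induce_indepGraph hT
    ((hc.2.2.2 k ⟨δ, hδN⟩ ⟨δ', hc.subset_ndSet k hδ'⟩ hk).mpr hδ') hδ

end IsComponents

end Components

section DegreeTwoFiber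

variable {𝒟 : Finset (Finset (Fin m))} {x y : BinCell m} {d : ℕ} {Γ : Fin (d + 1) → Set (Fin m)}

namespace IsComponents

lemma ne_of_mem (hc : IsComponents _ 𝒟 (pairTable x y) d Γ) {k : Fin (d + 1)} {δ : Fin m}
    (hδ : δ ∈ Γ k) : x δ ≠ y δ := by
  simpa [ndSet_pairTable] using hc.subset_ndSet k hδ

lemma flipTable_mem_fiber (hc : IsComponents _ 𝒟 (pairTable x y) d Γ) (k : Fin (d + 1)) :
    flipTable (Γ k) (pairTable x y) ∈ fiber _ 𝒟 (pairTable x y) := by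
  rw [flipTable_pairTable, pairTable_mem_fiber_iff]
  intro D hD
  by_cases hmeet : ∃ a ∈ D, a ∈ Γ k
  · obtain ⟨a, haD, hak⟩ := hmeet
    have hmem : ∀ δ ∈ D, δ ∈ Γ k ↔ x δ ≠ y δ := fun δ hδ =>
      ⟨hc.ne_of_mem, fun hne =>
        hc.mem_of_mem_of_mem_ndSet hD haD hak hδ (by simpa [ndSet_pairTable] using hne)⟩
    rw [restrictC_flipCell_eq_of_forall_mem_iff hmem,
      restrictC_flipCell_eq_of_forall_mem_iff fun δ hδ => (hmem δ hδ).trans ne_comm,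
      Sym2.eq_swap]
  · push Not at hmeet
    rw [restrictC_flipCell_of_forall_notMem hmeet, restrictC_flipCell_of_forall_notMem hmeet]

end IsComponents

lemma mapsTo_flipTable_fiber (hdeg : ∀ n ∈ fiber _ 𝒟 (pairTable x y), total _ n = 2)
    {S : Set (Fin m)} (hS : flipTable S (pairTable x y) ∈ fiber _ 𝒟 (pairTable x y)) :
    Set.MapsTo (flipTable S) (fiber _ 𝒟 (pairTable x y)) (fiber _ 𝒟 (pairTable x y)) := by
  intro n hn
  obtain ⟨u, v, rfl⟩ := exists_pairTable_of_sum_eq_two (hdeg n hn)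
  rw [flipTable_pairTable, pairTable_mem_fiber_iff] at hS ⊢
  intro D hD
  rw [← hS D hD]
  rcases Sym2.eq_iff.mp (pairTable_mem_fiber_iff.mp hn D hD) with ⟨hu, hv⟩ | ⟨hu, hv⟩
  · rw [restrictC_flipCell_congr S hu, restrictC_flipCell_congr S hv]
  · rw [restrictC_flipCell_congr S hu, restrictC_flipCell_congr S hv, Sym2.eq_swap]

lemma bijOn_GbApply_fiber (hdeg : ∀ n ∈ fiber _ 𝒟 (pairTable x y), total _ n = 2)
    (hc : IsComponents _ 𝒟 (pairTable x y) d Γ) (L : List (Fin (d + 1))) :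
    Set.BijOn (GbApply d Γ L) (fiber _ 𝒟 (pairTable x y)) (fiber _ 𝒟 (pairTable x y)) := by
  induction L with
  | nil => exact Set.bijOn_id _
  | cons l L ih =>
    have hmaps := mapsTo_flipTable_fiber hdeg (hc.flipTable_mem_fiber l)
    have hinv : Set.InvOn (flipTable (Γ l)) (flipTable (Γ l)) (fiber _ 𝒟 (pairTable x y))
        (fiber _ 𝒟 (pairTable x y)) :=
      ⟨fun n _ => flipTable_involutive _ n, fun n _ => flipTable_involutive _ n⟩
    rw [GbApply_cons]
    exact (hinv.bijOn hmaps hmaps).comp ih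

open scoped Classical in
lemma IsComponents.exists_flipTable_eq (hc : IsComponents _ 𝒟 (pairTable x y) d Γ)
    (hcov : ∀ δ : Fin m, ∃ D ∈ 𝒟, δ ∈ D) {u v : BinCell m}
    (hf : pairTable u v ∈ fiber _ 𝒟 (pairTable x y)) :
    ∃ K : Finset (Fin (d + 1)), 0 ∉ K ∧
      flipTable (⋃ k ∈ K, Γ k) (pairTable x y) = pairTable u v := by
  have hpt := sym2_apply_eq_of_pairTable_mem_fiber hcov hf
  wlog h0 : ¬ Γ 0 ⊆ {δ | u δ ≠ x δ} generalizing u v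
  · obtain ⟨a, ha⟩ := hc.1 0
    have hva : v a = x a := by
      rcases Sym2.eq_iff.mp (hpt a) with ⟨hu, -⟩ | ⟨-, hv⟩
      · exact absurd hu (not_not.mp h0 ha)
      · exact hv
    rw [pairTable_comm u v] at hf ⊢
    exact this hf (fun δ => Sym2.eq_swap.trans (hpt δ)) fun h => h ha hva
  set T := {δ | u δ ≠ x δ}
  have hTN : T ⊆ ndSet _ (pairTable x y) := fun δ (hδ : u δ ≠ x δ) => by
    rcases Sym2.eq_iff.mp (hpt δ) with ⟨hu, -⟩ | ⟨hu, -⟩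
    · exact absurd hu hδ
    · simpa [ndSet_pairTable, ← hu] using hδ.symm
  have hT : ∀ D ∈ 𝒟, ∀ a ∈ D, ∀ b ∈ D, b ∈ ndSet _ (pairTable x y) → a ∈ T → b ∈ T := by
    intro D hD a ha b hb hbN (haT : u a ≠ x a)
    rw [ndSet_pairTable] at hbN
    rcases Sym2.eq_iff.mp (pairTable_mem_fiber_iff.mp hf D hD) with ⟨hu, -⟩ | ⟨hu, -⟩
    · exact absurd (restrictC_eq_restrictC_iff.mp hu a ha) haT
    · exact fun hb' => hbN ((restrictC_eq_restrictC_iff.mp hu b hb).symm.trans hb').symm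
  refine ⟨Finset.univ.filter fun k => Γ k ⊆ T, by simpa using h0, ?_⟩
  rw [← hc.eq_iUnion_of_closed hTN hT, flipTable_pairTable, flipCell_setOf_ne,
    flipCell_setOf_ne_eq_of_sym2_eq hpt]

end DegreeTwoFiber

/-- for binary variables, the group `G_b` generated by the maps swapping
the levels of all variables of a component `Γ_l`, `l = 2, …, c`, maps the degree two
fiber `F_b` to itself and acts transitively on it. -/
theorem statement17 (m : ℕ) (𝒟 : Finset (Finset (Fin m)))
    (hcov : ∀ δ : Fin m, ∃ D ∈ 𝒟, δ ∈ D)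
    (n₀ : Cell (fun _ : Fin m => 2) → ℕ)
    (hdeg : ∀ n ∈ fiber (fun _ : Fin m => 2) 𝒟 n₀, total (fun _ : Fin m => 2) n = 2)
    (d : ℕ) (Γ : Fin (d + 1) → Set (Fin m))
    (hcomp : IsComponents (fun _ : Fin m => 2) 𝒟 n₀ d Γ) :
    (∀ L : List (Fin (d + 1)), (∀ l ∈ L, l ≠ 0) →
      Set.BijOn (GbApply d Γ L) (fiber (fun _ : Fin m => 2) 𝒟 n₀)
        (fiber (fun _ : Fin m => 2) 𝒟 n₀)) ∧
    (∀ n ∈ fiber (fun _ : Fin m => 2) 𝒟 n₀,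
      ∀ n' ∈ fiber (fun _ : Fin m => 2) 𝒟 n₀,
      ∃ L : List (Fin (d + 1)), (∀ l ∈ L, l ≠ 0) ∧ n' = GbApply d Γ L n) := by
  obtain ⟨x, y, rfl⟩ := exists_pairTable_of_sum_eq_two (hdeg n₀ fun _ _ _ => rfl)
  refine ⟨fun L _ => bijOn_GbApply_fiber hdeg hcomp L, fun n hn n' hn' => ?_⟩
  obtain ⟨u, v, rfl⟩ := exists_pairTable_of_sum_eq_two (hdeg n hn)
  obtain ⟨u', v', rfl⟩ := exists_pairTable_of_sum_eq_two (hdeg n' hn')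
  obtain ⟨K, hK, hKuv⟩ := hcomp.exists_flipTable_eq hcov hn
  obtain ⟨K', hK', hK'uv⟩ := hcomp.exists_flipTable_eq hcov hn'
  refine ⟨K'.toList ++ K.toList, ?_, ?_⟩
  · simp only [List.mem_append, Finset.mem_toList]
    rintro l (hl | hl) rfl <;> contradiction
  · rw [GbApply_append, GbApply_toList hcomp.2.2.1, GbApply_toList hcomp.2.2.1,
      Function.comp_apply, ← hKuv, flipTable_involutive, hK'uv]
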